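/- For all 1 ≤ a ≤ n−2, all i ∈ I^n and all A ∈ SetPar_n, the following identities hold in 𝕜[[y_1,…,y_n]]: (σ_{a+1}σ_a)·P_{a+1}(i,A) = P_a(σ_{a+1}σ_a·(i,A)), and, assuming in addition that q has a square root s in 𝕜, (σ_{a+1}σ_a)·Q_{a+1}(i,A) = Q_a(σ_{a+1}σ_a·(i,A)). -/

import Mathlib

open scoped Classical

noncomputable section

namespace PS19

variable (𝕜 : Type) [Field 𝕜]

/-- For `i ∈ ℤ/eℤ`, the power `q^i ∈ 𝕜` (well defined when `e` is the order of `q`):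
it is `q` raised to the canonical integer representative of `i`. -/
def qpow (q : 𝕜) {e : ℕ} (i : ZMod e) : 𝕜 := q ^ (ZMod.cast i : ℤ)

/-- The action of a permutation of the variables on `𝕜[[y_1, …, y_n]]`. -/
def permPS {n : ℕ} (σ : Equiv.Perm (Fin n)) (f : MvPowerSeries (Fin n) 𝕜) :
    MvPowerSeries (Fin n) 𝕜 :=
  fun m => f (Finsupp.equivMapDomain σ.symm m)

/-- The action of a permutation on residue sequences (place permutation). -/
def permI {e n : ℕ} (σ : Equiv.Perm (Fin n)) (i : Fin n → ZMod e) : Fin n → ZMod e :=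
  fun b => i (σ.symm b)

/-- The action of a permutation on set partitions. -/
def permSetoid {n : ℕ} (σ : Equiv.Perm (Fin n)) (A : Setoid (Fin n)) : Setoid (Fin n) where
  r x y := A.r (σ.symm x) (σ.symm y)
  iseqv := ⟨fun _ => A.iseqv.refl _, fun h => A.iseqv.symm h, fun h h' => A.iseqv.trans h h'⟩

/-- The simple transposition `σ_a = (a, a+1)` (0-based). -/
def sw (n a : ℕ) (h : a + 1 < n) : Equiv.Perm (Fin n) :=
  Equiv.swap ⟨a, by omega⟩ ⟨a + 1, h⟩

/-- `y_a(i) = q^{i_a} (1 − y_a) ∈ 𝕜[[y_1, …, y_n]]`. -/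
def yI {e n : ℕ} (q : 𝕜) (i : Fin n → ZMod e) (a : Fin n) : MvPowerSeries (Fin n) 𝕜 :=
  qpow 𝕜 q (i a) • ((1 : MvPowerSeries (Fin n) 𝕜) - MvPowerSeries.X a)

/-- The power series `P_a(i, A)` (0-based index `a`). -/
def P {e n : ℕ} (q : 𝕜) (a : ℕ) (h : a + 1 < n) (i : Fin n → ZMod e)
    (A : Setoid (Fin n)) : MvPowerSeries (Fin n) 𝕜 :=
  if A.r ⟨a, by omega⟩ ⟨a + 1, h⟩ then
    (if i ⟨a, by omega⟩ = i ⟨a + 1, h⟩ then 1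
     else (1 - q) • (1 - yI 𝕜 q i ⟨a, by omega⟩ * (yI 𝕜 q i ⟨a + 1, h⟩)⁻¹)⁻¹)
  else 0

/-- The power series `Q_a(i, A)` (0-based index `a`), depending on a fixed square root `s`
of `q`. -/
def Q {e n : ℕ} (q s : 𝕜) (a : ℕ) (h : a + 1 < n) (i : Fin n → ZMod e)
    (A : Setoid (Fin n)) : MvPowerSeries (Fin n) 𝕜 :=
  if A.r ⟨a, by omega⟩ ⟨a + 1, h⟩ then
    (if i ⟨a, by omega⟩ = i ⟨a + 1, h⟩ then
      algebraMap 𝕜 (MvPowerSeries (Fin n) 𝕜) (1 - q)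
        - q • MvPowerSeries.X ⟨a + 1, h⟩ - MvPowerSeries.X ⟨a, by omega⟩
     else if i ⟨a + 1, h⟩ = i ⟨a, by omega⟩ + 1 then
      (yI 𝕜 q i ⟨a, by omega⟩ - q • yI 𝕜 q i ⟨a + 1, h⟩)
        * ((yI 𝕜 q i ⟨a, by omega⟩ - yI 𝕜 q i ⟨a + 1, h⟩)⁻¹) ^ 2
     else if i ⟨a + 1, h⟩ = i ⟨a, by omega⟩ - 1 then
      algebraMap 𝕜 (MvPowerSeries (Fin n) 𝕜) (qpow 𝕜 q (i ⟨a, by omega⟩))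
     else
      (yI 𝕜 q i ⟨a, by omega⟩ - q • yI 𝕜 q i ⟨a + 1, h⟩)
        * (yI 𝕜 q i ⟨a, by omega⟩ - yI 𝕜 q i ⟨a + 1, h⟩)⁻¹)
  else algebraMap 𝕜 (MvPowerSeries (Fin n) 𝕜) s

section PermLemmas
variable {n : ℕ} (σ : Equiv.Perm (Fin n))

lemma permPS_coeff (f : MvPowerSeries (Fin n) 𝕜) (m : Fin n →₀ ℕ) :
    MvPowerSeries.coeff m (permPS 𝕜 σ f)
      = MvPowerSeries.coeff (Finsupp.equivMapDomain σ.symm m) f := rfl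

lemma permPS_sub (f g : MvPowerSeries (Fin n) 𝕜) :
    permPS 𝕜 σ (f - g) = permPS 𝕜 σ f - permPS 𝕜 σ g := rfl

lemma permPS_smul (c : 𝕜) (f : MvPowerSeries (Fin n) 𝕜) :
    permPS 𝕜 σ (c • f) = c • permPS 𝕜 σ f := rfl

lemma equivMapDomain_eq_zero {α β M : Type*} [Zero M] (e : α ≃ β) (m : α →₀ M) :
    Finsupp.equivMapDomain e m = 0 ↔ m = 0 := by
  constructor
  · intro hm
    have := congrArg (Finsupp.equivMapDomain e.symm) hm
    simpa [← Finsupp.equivMapDomain_trans, Finsupp.equivMapDomain_refl] using this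
  · rintro rfl; exact Finsupp.equivMapDomain_zero

lemma permPS_one : permPS 𝕜 σ (1 : MvPowerSeries (Fin n) 𝕜) = 1 := by
  ext m
  rw [permPS_coeff, MvPowerSeries.coeff_one, MvPowerSeries.coeff_one]
  simp [equivMapDomain_eq_zero]

lemma equivMapDomain_add {α β : Type*} (e : α ≃ β) (x y : α →₀ ℕ) :
    Finsupp.equivMapDomain e (x + y)
      = Finsupp.equivMapDomain e x + Finsupp.equivMapDomain e y := by
  ext b; simp [Finsupp.equivMapDomain_apply]

lemma permPS_mul (f g : MvPowerSeries (Fin n) 𝕜) :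
    permPS 𝕜 σ (f * g) = permPS 𝕜 σ f * permPS 𝕜 σ g := by
  ext m
  rw [permPS_coeff, MvPowerSeries.coeff_mul, MvPowerSeries.coeff_mul]
  refine Finset.sum_nbij' (fun p => (Finsupp.equivMapDomain σ.symm.symm p.1,
      Finsupp.equivMapDomain σ.symm.symm p.2))
    (fun p => (Finsupp.equivMapDomain σ.symm p.1, Finsupp.equivMapDomain σ.symm p.2))
    ?_ ?_ ?_ ?_ ?_
  · intro p hp
    rw [Finset.HasAntidiagonal.mem_antidiagonal] at hp ⊢
    rw [← equivMapDomain_add, hp]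
    simp [← Finsupp.equivMapDomain_trans]
  · intro p hp
    rw [Finset.HasAntidiagonal.mem_antidiagonal] at hp ⊢
    rw [← equivMapDomain_add, hp]
  · intro p hp
    simp [← Finsupp.equivMapDomain_trans, Finsupp.equivMapDomain_refl]
  · intro p hp
    simp [← Finsupp.equivMapDomain_trans, Finsupp.equivMapDomain_refl]
  · intro p hp
    simp only [permPS_coeff, ← Finsupp.equivMapDomain_trans, Equiv.symm_symm,
      Equiv.self_trans_symm, Finsupp.equivMapDomain_refl]

lemma permPS_X (b : Fin n) :
    permPS 𝕜 σ (MvPowerSeries.X b) = MvPowerSeries.X (σ b) := by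
  ext m
  rw [permPS_coeff, MvPowerSeries.coeff_X, MvPowerSeries.coeff_X]
  congr 1
  simp only [eq_iff_iff]
  constructor
  · intro hm
    have := congrArg (Finsupp.equivMapDomain σ.symm.symm) hm
    simpa [← Finsupp.equivMapDomain_trans, Finsupp.equivMapDomain_refl,
      Finsupp.equivMapDomain_single] using this
  · rintro rfl
    simp [Finsupp.equivMapDomain_single]

lemma permPS_constantCoeff (f : MvPowerSeries (Fin n) 𝕜) :
    MvPowerSeries.constantCoeff (permPS 𝕜 σ f)
      = MvPowerSeries.constantCoeff f := by
  have : MvPowerSeries.constantCoeff (permPS 𝕜 σ f)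
      = MvPowerSeries.coeff 0 (permPS 𝕜 σ f) := rfl
  rw [this, permPS_coeff]
  simp [Finsupp.equivMapDomain_zero]

lemma permPS_inv (f : MvPowerSeries (Fin n) 𝕜) :
    permPS 𝕜 σ f⁻¹ = (permPS 𝕜 σ f)⁻¹ := by
  by_cases hf : MvPowerSeries.constantCoeff f = 0
  · rw [MvPowerSeries.inv_eq_zero.mpr hf,
      (MvPowerSeries.inv_eq_zero.mpr (by rw [permPS_constantCoeff]; exact hf) :
        (permPS 𝕜 σ f)⁻¹ = 0)]
    rfl
  · rw [MvPowerSeries.eq_inv_iff_mul_eq_one (by rw [permPS_constantCoeff]; exact hf),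
      ← permPS_mul, MvPowerSeries.inv_mul_cancel _ hf, permPS_one]

lemma permPS_algebraMap (c : 𝕜) :
    permPS 𝕜 σ (algebraMap 𝕜 (MvPowerSeries (Fin n) 𝕜) c)
      = algebraMap 𝕜 (MvPowerSeries (Fin n) 𝕜) c := by
  rw [Algebra.algebraMap_eq_smul_one, permPS_smul, permPS_one]


lemma permPS_pow (k : ℕ) (f : MvPowerSeries (Fin n) 𝕜) :
    permPS 𝕜 σ (f ^ k) = permPS 𝕜 σ f ^ k := by
  induction k with
  | zero => simpa using permPS_one 𝕜 σ
  | succ k ih => rw [pow_succ, pow_succ, permPS_mul, ih]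

lemma permPS_yI {e : ℕ} (q : 𝕜) (i : Fin n → ZMod e) (b : Fin n) :
    permPS 𝕜 σ (yI 𝕜 q i b) = yI 𝕜 q (permI σ i) (σ b) := by
  rw [yI, yI, permPS_smul, permPS_sub, permPS_one, permPS_X]
  congr 2
  simp [permI]

lemma permPS_zero : permPS 𝕜 σ (0 : MvPowerSeries (Fin n) 𝕜) = 0 := rfl

set_option maxHeartbeats 1000000 in
lemma P_aux {e : ℕ} (q : 𝕜) (a : ℕ) (h : a + 2 < n) (i : Fin n → ZMod e)
    (A : Setoid (Fin n))
    (hp1 : σ ⟨a + 1, Nat.lt_of_succ_lt h⟩ = ⟨a, by omega⟩)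
    (hp2 : σ ⟨a + 1 + 1, by omega⟩ = ⟨a + 1, Nat.lt_of_succ_lt h⟩) :
    permPS 𝕜 σ (P 𝕜 q (a + 1) (by omega) i A)
      = P 𝕜 q a (Nat.lt_of_succ_lt h) (permI σ i) (permSetoid σ A) := by
  have hs0 : σ.symm ⟨a, by omega⟩ = ⟨a + 1, Nat.lt_of_succ_lt h⟩ := by
    exact (Equiv.symm_apply_eq σ).mpr hp1.symm
  have hs1 : σ.symm ⟨a + 1, Nat.lt_of_succ_lt h⟩ = ⟨a + 1 + 1, by omega⟩ := by
    exact (Equiv.symm_apply_eq σ).mpr hp2.symm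
  have hA : (permSetoid σ A).r ⟨a, by omega⟩ ⟨a + 1, Nat.lt_of_succ_lt h⟩
      = A.r ⟨a + 1, Nat.lt_of_succ_lt h⟩ ⟨a + 1 + 1, by omega⟩ := congrArg₂ A.r hs0 hs1
  have hI0 : permI σ i ⟨a, by omega⟩ = i ⟨a + 1, Nat.lt_of_succ_lt h⟩ := congrArg i hs0
  have hI1 : permI σ i ⟨a + 1, Nat.lt_of_succ_lt h⟩ = i ⟨a + 1 + 1, by omega⟩ := congrArg i hs1
  conv_rhs => rw [P]
  simp only [hA, hI0, hI1]
  conv_lhs => rw [P]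
  split_ifs with h1 h2
  · exact permPS_one 𝕜 σ
  · simp only [permPS_smul, permPS_inv, permPS_sub, permPS_one, permPS_mul,
      permPS_yI, hp1, hp2]
  · exact permPS_zero 𝕜 σ

set_option maxHeartbeats 1000000 in
lemma Q_aux {e : ℕ} (q s : 𝕜) (a : ℕ) (h : a + 2 < n) (i : Fin n → ZMod e)
    (A : Setoid (Fin n))
    (hp1 : σ ⟨a + 1, Nat.lt_of_succ_lt h⟩ = ⟨a, by omega⟩)
    (hp2 : σ ⟨a + 1 + 1, by omega⟩ = ⟨a + 1, Nat.lt_of_succ_lt h⟩) :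
    permPS 𝕜 σ (Q 𝕜 q s (a + 1) (by omega) i A)
      = Q 𝕜 q s a (Nat.lt_of_succ_lt h) (permI σ i) (permSetoid σ A) := by
  have hs0 : σ.symm ⟨a, by omega⟩ = ⟨a + 1, Nat.lt_of_succ_lt h⟩ := by
    exact (Equiv.symm_apply_eq σ).mpr hp1.symm
  have hs1 : σ.symm ⟨a + 1, Nat.lt_of_succ_lt h⟩ = ⟨a + 1 + 1, by omega⟩ := by
    exact (Equiv.symm_apply_eq σ).mpr hp2.symm
  have hA : (permSetoid σ A).r ⟨a, by omega⟩ ⟨a + 1, Nat.lt_of_succ_lt h⟩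
      = A.r ⟨a + 1, Nat.lt_of_succ_lt h⟩ ⟨a + 1 + 1, by omega⟩ := congrArg₂ A.r hs0 hs1
  have hI0 : permI σ i ⟨a, by omega⟩ = i ⟨a + 1, Nat.lt_of_succ_lt h⟩ := congrArg i hs0
  have hI1 : permI σ i ⟨a + 1, Nat.lt_of_succ_lt h⟩ = i ⟨a + 1 + 1, by omega⟩ := congrArg i hs1
  conv_rhs => rw [Q]
  simp only [hA, hI0, hI1]
  conv_lhs => rw [Q]
  split_ifs
  · simp only [permPS_sub, permPS_smul, permPS_X, permPS_algebraMap, hp1, hp2]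
  · simp only [permPS_mul, permPS_pow, permPS_inv, permPS_sub, permPS_smul,
      permPS_yI, hp1, hp2]
  · exact permPS_algebraMap 𝕜 σ _
  · simp only [permPS_mul, permPS_inv, permPS_sub, permPS_smul,
      permPS_yI, hp1, hp2]
  · exact permPS_algebraMap 𝕜 σ _

end PermLemmas

end PS19

open PS19 in
/-- with `e := orderOf q ≠ 2`, for all `a` (0-based: `a + 2 < n`), all
`i ∈ I^n` and all `A ∈ SetPar_n`, in `𝕜[[y_1, …, y_n]]` one has
`(σ_{a+1} σ_a) · P_{a+1}(i,A) = P_a(σ_{a+1} σ_a · (i,A))`, and, for every square root `s`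
of `q`, `(σ_{a+1} σ_a) · Q_{a+1}(i,A) = Q_a(σ_{a+1} σ_a · (i,A))`. -/
theorem statement19 (𝕜 : Type) [Field 𝕜] (n : ℕ) (q : 𝕜) (hq0 : q ≠ 0) (hq1 : q ≠ 1)
    (he : orderOf q ≠ 2) :
    ∀ (a : ℕ) (h : a + 2 < n) (i : Fin n → ZMod (orderOf q)) (A : Setoid (Fin n)),
      (permPS 𝕜 (sw n (a + 1) h * sw n a (by omega)) (P 𝕜 q (a + 1) h i A)
        = P 𝕜 q a (by omega)
            (permI (sw n (a + 1) h * sw n a (by omega)) i)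
            (permSetoid (sw n (a + 1) h * sw n a (by omega)) A))
      ∧ (∀ s : 𝕜, s * s = q →
        permPS 𝕜 (sw n (a + 1) h * sw n a (by omega)) (Q 𝕜 q s (a + 1) h i A)
          = Q 𝕜 q s a (by omega)
              (permI (sw n (a + 1) h * sw n a (by omega)) i)
              (permSetoid (sw n (a + 1) h * sw n a (by omega)) A)) := by
  intro a h i A
  have ne1 : (⟨a, by omega⟩ : Fin n) ≠ ⟨a + 1, by omega⟩ := by
    intro hc; simp only [Fin.mk.injEq] at hc; omega
  have ne2 : (⟨a, by omega⟩ : Fin n) ≠ ⟨a + 1 + 1, by omega⟩ := by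
    intro hc; simp only [Fin.mk.injEq] at hc; omega
  have ne3 : (⟨a + 1 + 1, by omega⟩ : Fin n) ≠ ⟨a, by omega⟩ := by
    intro hc; simp only [Fin.mk.injEq] at hc; omega
  have ne4 : (⟨a + 1 + 1, by omega⟩ : Fin n) ≠ ⟨a + 1, by omega⟩ := by
    intro hc; simp only [Fin.mk.injEq] at hc; omega
  have hp1 : (sw n (a + 1) h * sw n a (by omega)) ⟨a + 1, by omega⟩ = ⟨a, by omega⟩ := by
    simp only [sw, Equiv.Perm.mul_apply, Equiv.swap_apply_right,
      Equiv.swap_apply_of_ne_of_ne ne1 ne2]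
  have hp2 : (sw n (a + 1) h * sw n a (by omega)) ⟨a + 1 + 1, by omega⟩
      = ⟨a + 1, by omega⟩ := by
    simp only [sw, Equiv.Perm.mul_apply, Equiv.swap_apply_of_ne_of_ne ne3 ne4,
      Equiv.swap_apply_right]
  exact ⟨P_aux 𝕜 _ q a (by omega) i A hp1 hp2,
    fun s hs => Q_aux 𝕜 _ q s a (by omega) i A hp1 hp2⟩

end
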